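/- For a, b ∈ ℝ let M(a,b) be the 4×4 real symmetric matrix [[1,0,0,a/4],[0,1/4,a/4,0],[0,a/4,b,0],[a/4,0,0,1/4]], viewed in Her₂(ℂ)⊗Her₂(ℂ). Then M(a,b) is block positive (i.e., (x⊗y)* M(a,b) (x⊗y) ≥ 0 for all x, y ∈ ℂ²) if and only if (a,b) ∈ S₁ ∪ S₂, where S₁ = {(a,b) | (b+1−a²)² ≤ 4b} and S₂ = {(a,b) | (b+1−a²)² ≥ 4b, b ≥ 0, a² ≤ b+1}. -/

import Mathlib

/-!
Writing `P, Q, S, T` for `|x₀|², |x₁|², |y₀|², |y₁|²`, the form `(x⊗y)* M(a,b) (x⊗y)` equals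
`(P + bQ) S + (P + Q) T / 4 + a Re(x̄₀x₁) Re(ȳ₀y₁)`. Since `Re(x̄₀x₁)² ≤ PQ`, `Re(ȳ₀y₁)² ≤ ST`
and, by AM-GM, `(P + bQ) S + (P + Q) T / 4 ≥ √((P + bQ)(P + Q) S T)`, block positivity amounts
to `a² PQ ≤ (P + bQ)(P + Q)` for all `P, Q ≥ 0`, i.e. to copositivity of the binary form
`P² + (b + 1 - a²) PQ + b Q²`; the witnesses `x = (p, q)`, `y = ((p² + q²)/4, -apq/2)` show that
nothing is lost. A binary form `P² + mPQ + nQ²` is copositive iff it is positive semidefinite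
(`m² ≤ 4n`) or its two other coefficients are nonnegative.
-/

open Matrix Kronecker ComplexOrder

/-- The matrix `M(a,b) = E₁₁ ⊗ diag(1,1/4) + (E₁₂+E₂₁) ⊗ [[0,a/4],[a/4,0]]
+ E₂₂ ⊗ diag(b,1/4)` in `Her₂(ℂ) ⊗ Her₂(ℂ)`. -/
noncomputable def Mab (a b : ℝ) : Matrix (Fin 2 × Fin 2) (Fin 2 × Fin 2) ℂ :=
  (!![1, 0; 0, 0] : Matrix (Fin 2) (Fin 2) ℂ) ⊗ₖ !![1, 0; 0, 1/4] +
    (!![0, 1; 1, 0] : Matrix (Fin 2) (Fin 2) ℂ) ⊗ₖ !![0, (a : ℂ)/4; (a : ℂ)/4, 0] +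
    (!![0, 0; 0, 1] : Matrix (Fin 2) (Fin 2) ℂ) ⊗ₖ !![(b : ℂ), 0; 0, 1/4]

open Complex ComplexConjugate

def BinaryFormCopositive (m n : ℝ) : Prop :=
  ∀ P Q : ℝ, 0 ≤ P → 0 ≤ Q → 0 ≤ P ^ 2 + m * P * Q + n * Q ^ 2

theorem binaryFormCopositive_iff (m n : ℝ) :
    BinaryFormCopositive m n ↔ m ^ 2 ≤ 4 * n ∨ (0 ≤ n ∧ 0 ≤ m) := by
  constructor
  · intro h
    have hn : 0 ≤ n := by simpa using h 0 1 le_rfl zero_le_one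
    by_contra! hbad
    have hm : m < 0 := hbad.2 hn
    -- at `(P, Q) = (-m, 2)` the form equals `4n - m²`
    have := h (-m) 2 (by linarith) zero_le_two
    nlinarith [hbad.1]
  · rintro (hdisc | ⟨hn, hm⟩) P Q hP hQ
    · nlinarith [sq_nonneg (2 * P + m * Q), sq_nonneg Q]
    · positivity

theorem neg_le_add_of_sq_le_four_mul {u v e : ℝ} (hu : 0 ≤ u) (hv : 0 ≤ v)
    (h : e ^ 2 ≤ 4 * u * v) : -(u + v) ≤ e :=
  (abs_le_of_sq_le_sq' (by nlinarith [sq_nonneg (u - v)]) (add_nonneg hu hv)).1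

theorem sq_re_conj_mul_le (z w : ℂ) : ((conj z * w).re) ^ 2 ≤ normSq z * normSq w := by
  rw [sq, ← normSq_conj z, ← normSq_mul]
  exact re_sq_le_normSq _

def productForm {m n : Type*} [Fintype m] [Fintype n] (M : Matrix (m × n) (m × n) ℂ)
    (x : m → ℂ) (y : n → ℂ) : ℂ :=
  star (fun p : m × n => x p.1 * y p.2) ⬝ᵥ M *ᵥ (fun p : m × n => x p.1 * y p.2)

def BlockPositive {m n : Type*} [Fintype m] [Fintype n] (M : Matrix (m × n) (m × n) ℂ) :
    Prop :=
  ∀ x y, 0 ≤ productForm M x y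

theorem productForm_Mab (a b : ℝ) (x y : Fin 2 → ℂ) :
    productForm (Mab a b) x y =
      ((normSq (x 0) * normSq (y 0) + b * normSq (x 1) * normSq (y 0)
        + (normSq (x 0) + normSq (x 1)) * normSq (y 1) / 4
        + a * (conj (x 0) * x 1).re * (conj (y 0) * y 1).re : ℝ) : ℂ) := by
  have hre : ∀ z : ℂ, ((z.re : ℝ) : ℂ) = (z + conj z) / 2 := by
    intro z; rw [add_conj]; push_cast; ring
  have hns : ∀ z : ℂ, ((normSq z : ℝ) : ℂ) = conj z * z := by
    intro z; rw [← mul_conj]; ring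
  push_cast
  rw [hre, hre, hns, hns, hns, hns]
  simp only [productForm, Mab, dotProduct, mulVec, Fintype.sum_prod_type, Fin.sum_univ_two,
    Matrix.add_apply, kroneckerMap_apply, Pi.star_apply, RCLike.star_def,
    cons_val', cons_val_zero, cons_val_one, empty_val', cons_val_fin_one, of_apply,
    _root_.map_mul, conj_conj]
  ring

theorem productForm_Mab_ofReal (a b p q s t : ℝ) :
    productForm (Mab a b) ![(p : ℂ), q] ![(s : ℂ), t] =
      (((p ^ 2 + b * q ^ 2) * s ^ 2 + (p ^ 2 + q ^ 2) * t ^ 2 / 4 + a * (p * q) * (s * t) : ℝ)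
        : ℂ) := by
  rw [productForm_Mab]
  congr 1
  simp only [cons_val_zero, cons_val_one, normSq_ofReal, conj_ofReal, ← ofReal_mul, ofReal_re]
  ring

theorem productForm_Mab_nonneg {a b : ℝ} (h : BinaryFormCopositive (b + 1 - a ^ 2) b)
    (x y : Fin 2 → ℂ) : 0 ≤ productForm (Mab a b) x y := by
  rw [productForm_Mab, zero_le_real]
  have hb : 0 ≤ b := by simpa using h 0 1 le_rfl zero_le_one
  set P := normSq (x 0)
  set Q := normSq (x 1)
  set S := normSq (y 0)
  set T := normSq (y 1)
  have hP : 0 ≤ P := normSq_nonneg _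
  have hQ : 0 ≤ Q := normSq_nonneg _
  have hS : 0 ≤ S := normSq_nonneg _
  have hT : 0 ≤ T := normSq_nonneg _
  have hform : a ^ 2 * (P * Q) ≤ (P + b * Q) * (P + Q) := by
    have := h P Q hP hQ
    linarith
  have hcd : (a * (conj (x 0) * x 1).re * (conj (y 0) * y 1).re) ^ 2
      ≤ 4 * ((P + b * Q) * S) * ((P + Q) * T / 4) :=
    calc _ = a ^ 2 * (conj (x 0) * x 1).re ^ 2 * (conj (y 0) * y 1).re ^ 2 := by ring
      _ ≤ a ^ 2 * (P * Q) * (S * T) := by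
        gcongr
        · exact sq_re_conj_mul_le _ _
        · exact sq_re_conj_mul_le _ _
      _ ≤ (P + b * Q) * (P + Q) * (S * T) := by gcongr
      _ = _ := by ring
  have := neg_le_add_of_sq_le_four_mul (by positivity) (by positivity) hcd
  linarith

theorem binaryFormCopositive_of_blockPositive_Mab {a b : ℝ} (h : BlockPositive (Mab a b)) :
    BinaryFormCopositive (b + 1 - a ^ 2) b := by
  intro P Q hP hQ
  obtain ⟨p, rfl⟩ : ∃ p : ℝ, P = p ^ 2 := ⟨√P, (Real.sq_sqrt hP).symm⟩
  obtain ⟨q, rfl⟩ : ∃ q : ℝ, Q = q ^ 2 := ⟨√Q, (Real.sq_sqrt hQ).symm⟩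
  rcases (add_nonneg hP hQ).eq_or_lt with hzero | hpos
  · have hp : p ^ 2 = 0 := by linarith
    have hq : q ^ 2 = 0 := by linarith
    simp [hp, hq]
  · have hwitness :=
      h ![(p : ℂ), q] ![(((p ^ 2 + q ^ 2) / 4 : ℝ) : ℂ), ((-(a * p * q) / 2 : ℝ) : ℂ)]
    rw [productForm_Mab_ofReal, zero_le_real] at hwitness
    have hfactor : 0 ≤ (p ^ 2 + q ^ 2) / 16 *
        ((p ^ 2) ^ 2 + (b + 1 - a ^ 2) * p ^ 2 * q ^ 2 + b * (q ^ 2) ^ 2) :=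
      hwitness.trans_eq (by ring)
    exact nonneg_of_mul_nonneg_right hfactor (by positivity)

theorem blockPositive_Mab_iff (a b : ℝ) :
    BlockPositive (Mab a b) ↔ BinaryFormCopositive (b + 1 - a ^ 2) b :=
  ⟨binaryFormCopositive_of_blockPositive_Mab, productForm_Mab_nonneg⟩

theorem Mab_blockPositive_iff (a b : ℝ) :
    (∀ x y : Fin 2 → ℂ,
        0 ≤ star (fun p : Fin 2 × Fin 2 => x p.1 * y p.2) ⬝ᵥ
            (Mab a b).mulVec (fun p : Fin 2 × Fin 2 => x p.1 * y p.2)) ↔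
      ((b + 1 - a ^ 2) ^ 2 ≤ 4 * b ∨
        (4 * b ≤ (b + 1 - a ^ 2) ^ 2 ∧ 0 ≤ b ∧ a ^ 2 ≤ b + 1)) := by
  refine (blockPositive_Mab_iff a b).trans ?_
  rw [binaryFormCopositive_iff, sub_nonneg]
  rcases le_total ((b + 1 - a ^ 2) ^ 2) (4 * b) with h | h <;> simp [h]
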